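/- arXiv:1705.07765 — 2 statements merged into one kernel-verified Lean document; each statement's English description precedes it below -/
import Mathlib

section
/- Let G ≤ Π_n be any symmetry group. Then exactly one of the following alternatives holds: either the set of A ∈ 𝒜(G) for which Aut_aff(A) ≠ aff(Aut(A)) has μ_G-measure zero (affine exactness holds for almost every A ∈ 𝒜(G)), or Aut_aff(A) ≠ aff(Aut(A)) for every A ∈ 𝒜(G) (affine exactness fails for all A ∈ 𝒜(G)). -/
/- Setting: graphs are symmetric real n×n matrices. `pm n σ` is the permutation
matrix of `σ` (entry (i,j) equals 1 iff σ j = i, so it "sends j to σ j").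
`DS n` is the set of doubly stochastic matrices, `Aut A` the set of permutation
matrices commuting with `A`, `AutConv A` its doubly stochastic relaxation.
`Vset G`, `AcalA G` and `muG G` are V(G), 𝒜(G) and the Hausdorff measure μ_G
(of dimension d = dim V(G), w.r.t. the Frobenius/Euclidean norm) restricted to V(G). -/

open Matrix MeasureTheory Finset

noncomputable section

def pm (n : ℕ) (σ : Equiv.Perm (Fin n)) : Matrix (Fin n) (Fin n) ℝ :=
  Matrix.of fun i j => if σ j = i then (1 : ℝ) else 0

def IsPermMatrix {n : ℕ} (P : Matrix (Fin n) (Fin n) ℝ) : Prop :=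
  ∃ σ : Equiv.Perm (Fin n), P = pm n σ

def DS (n : ℕ) : Set (Matrix (Fin n) (Fin n) ℝ) :=
  {S | (∀ i j, 0 ≤ S i j) ∧ (∀ i, ∑ j, S i j = 1) ∧ (∀ j, ∑ i, S i j = 1)}

def Aut {n : ℕ} (A : Matrix (Fin n) (Fin n) ℝ) : Set (Matrix (Fin n) (Fin n) ℝ) :=
  {P | IsPermMatrix P ∧ A * P = P * A}

def AutConv {n : ℕ} (A : Matrix (Fin n) (Fin n) ℝ) : Set (Matrix (Fin n) (Fin n) ℝ) :=
  {S | S ∈ DS n ∧ A * S = S * A}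

/-- `DS(A)` is convex exact: the doubly stochastic commutants of `A` are exactly the
convex combinations of the permutation matrices commuting with `A`. -/
def ConvexExact {n : ℕ} (A : Matrix (Fin n) (Fin n) ℝ) : Prop :=
  AutConv A = convexHull ℝ (Aut A)

/-- The subgroup `G` of permutations, realized as a set of permutation matrices. -/
def matSet {n : ℕ} (G : Subgroup (Equiv.Perm (Fin n))) : Set (Matrix (Fin n) (Fin n) ℝ) :=
  (pm n) '' (G : Set (Equiv.Perm (Fin n)))

/-- `V(G)`: symmetric matrices invariant under conjugation by all elements of `G`. -/
def Vset {n : ℕ} (G : Subgroup (Equiv.Perm (Fin n))) : Set (Matrix (Fin n) (Fin n) ℝ) :=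
  {A | A.IsSymm ∧ ∀ σ ∈ G, (pm n σ)ᵀ * A * pm n σ = A}

/-- `𝒜(G)`: symmetric matrices whose automorphism group is exactly `G`. -/
def AcalA {n : ℕ} (G : Subgroup (Equiv.Perm (Fin n))) : Set (Matrix (Fin n) (Fin n) ℝ) :=
  {A | A.IsSymm ∧ Aut A = matSet G}

attribute [local instance] Matrix.frobeniusNormedAddCommGroup

instance matMeasurableSpace {m k : Type*} [Fintype m] [Fintype k] :
    MeasurableSpace (Matrix m k ℝ) := borel _

instance matBorelSpace {m k : Type*} [Fintype m] [Fintype k] :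
    BorelSpace (Matrix m k ℝ) := ⟨rfl⟩

/-- `μ_G`: the `dim V(G)`-dimensional Hausdorff measure restricted to `V(G)`. -/
def muG {n : ℕ} (G : Subgroup (Equiv.Perm (Fin n))) : Measure (Matrix (Fin n) (Fin n) ℝ) :=
  (@Measure.hausdorffMeasure _ _ _ matBorelSpace
    (Module.finrank ℝ ↥(Submodule.span ℝ (Vset G)) : ℝ)).restrict (Vset G)

/-- `N(𝒢)`: matrices supported on the union of the supports of the matrices in `𝒢`. -/
def Nset {n : ℕ} (𝒢 : Set (Matrix (Fin n) (Fin n) ℝ)) : Set (Matrix (Fin n) (Fin n) ℝ) :=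
  {T | ∀ i j, (∀ P ∈ 𝒢, P i j = 0) → T i j = 0}

/-- The affine automorphisms of `A`: matrices with row and column sums one, supported in
`N(Aut A)`, and commuting with `A`. -/
def AutAff {n : ℕ} (A : Matrix (Fin n) (Fin n) ℝ) : Set (Matrix (Fin n) (Fin n) ℝ) :=
  {S | S *ᵥ 1 = 1 ∧ (1 : Fin n → ℝ) ᵥ* S = 1 ∧ S ∈ Nset (Aut A) ∧ A * S = S * A}

/-- Affine exactness at `A`: the affine automorphisms are exactly the affine hull of
the automorphisms. -/
def AffineExact {n : ℕ} (A : Matrix (Fin n) (Fin n) ℝ) : Prop :=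
  AutAff A = (affineSpan ℝ (Aut A) : Set (Matrix (Fin n) (Fin n) ℝ))

/-!
For `A ∈ 𝒜(G)` we have `Aut A = G`, so `AutAff A - 1` is the kernel of `T ↦ AT - TA` on the
space `W` of matrices with zero row and column sums supported in `N(G)`, while `aff(Aut A) - 1`
is the subspace `D = vectorSpan G ⊆ W`, on which `T ↦ AT - TA` vanishes; `W` and `D` depend on
`G` only.
For a complement `U` of `D` in `W`, affine exactness at `A` thus says that `T ↦ AT - TA` is
injective on `U`: a determinant depending polynomially on `A ∈ V(G)` is nonzero. If this happens
once, it fails only on the zero set of a nonzero polynomial, which is null. If it never happens,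
the first alternative fails as well, because `𝒜(G)` has positive measure: inside `V(G)` its
complement lies in the finitely many proper subspaces commuting with some `P_σ`, `σ ∉ G`.
-/

theorem sup_inf_eq_left_iff_disjoint {α : Type*} [Lattice α] [OrderBot α] [IsModularLattice α]
    {a b c : α} (hab : Disjoint a b) (hac : a ≤ c) : (a ⊔ b) ⊓ c = a ↔ Disjoint b c := by
  rw [sup_inf_assoc_of_le b hac, sup_eq_left, disjoint_iff_inf_le]
  exact ⟨fun h => (le_inf h inf_le_left).trans hab.le_bot, fun h => h.trans bot_le⟩

theorem mem_affineSpan_iff_sub_mem_vectorSpan {k V : Type*} [Ring k] [AddCommGroup V]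
    [Module k V] {s : Set V} {p : V} (hp : p ∈ s) (q : V) :
    q ∈ affineSpan k s ↔ q - p ∈ vectorSpan k s := by
  rw [← direction_affineSpan, ← vsub_eq_sub,
    AffineSubspace.vsub_right_mem_direction_iff_mem (mem_affineSpan k hp)]

def commutatorLin (R A : Type*) [CommSemiring R] [Ring A] [Algebra R A] :
    A →ₗ[R] A →ₗ[R] A :=
  LinearMap.mul R A - (LinearMap.mul R A).flip

theorem mem_ker_commutatorLin_iff {R A : Type*} [CommSemiring R] [Ring A] [Algebra R A]
    {a b : A} : b ∈ LinearMap.ker (commutatorLin R A a) ↔ a * b = b * a := by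
  rw [LinearMap.mem_ker, commutatorLin, LinearMap.sub_apply, LinearMap.sub_apply,
    LinearMap.mul_apply', LinearMap.flip_apply, LinearMap.mul_apply', sub_eq_zero]

theorem MvPolynomial.volume_setOf_eval_eq_zero {d : ℕ} {p : MvPolynomial (Fin d) ℝ}
    (hp : p ≠ 0) : volume {x : Fin d → ℝ | eval x p = 0} = 0 := by
  induction d with
  | zero =>
    obtain ⟨c, rfl⟩ := C_surjective (Fin 0) p
    have hc : c ≠ 0 := by rintro rfl; exact hp C_0
    simp [hc]
  | succ d ih =>
    -- Fubini in the variable `x 0`: off the null zero set of the leading coefficient in `x 0`,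
    -- the slice is the finite root set of a nonzero polynomial.
    set q := finSuccEquiv ℝ d p
    have hq : q ≠ 0 := by simpa [q] using hp
    have hslice : ∀ᵐ s : Fin d → ℝ, volume {y : ℝ | eval (Fin.cons y s) p = 0} = 0 := by
      filter_upwards [measure_eq_zero_iff_ae_notMem.mp
        (ih (Polynomial.leadingCoeff_ne_zero.2 hq))] with s hs
      have hs' : q.map (eval s) ≠ 0 := fun h => hs <| by
        simpa [Polynomial.coeff_map] using congrArg (Polynomial.coeff · q.natDegree) h
      refine measure_mono_null (fun y hy => ?_)
        ((Polynomial.finite_setOfPred_isRoot hs').measure_zero _)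
      simpa [eval_eq_eval_mv_eval', q] using hy
    have hZ : MeasurableSet {x : Fin (d + 1) → ℝ | eval x p = 0} :=
      (isClosed_eq (continuous_eval p) continuous_const).measurableSet
    have he := (volume_preserving_piFinSuccAbove (fun _ : Fin (d + 1) => ℝ) 0).symm
    rw [← he.measure_preimage hZ.nullMeasurableSet, Measure.volume_eq_prod,
      Measure.prod_apply_symm (hZ.preimage he.measurable)]
    refine (lintegral_congr_ae ?_).trans lintegral_zero
    filter_upwards [hslice] with s hs
    simp only [MeasurableEquiv.piFinSuccAbove_symm_apply, Fin.insertNthEquiv_zero,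
      Set.preimage_ofPred_eq]
    exact hs

theorem MvPolynomial.exists_eval_eq_det {R σ ι : Type*} [CommRing R] [Fintype σ]
    [DecidableEq σ] [Fintype ι] [DecidableEq ι] (B : (σ → R) →ₗ[R] Matrix ι ι R) :
    ∃ p : MvPolynomial σ R, ∀ y, eval y p = (B y).det := by
  refine ⟨(Matrix.of fun i j => ∑ k, C (B (Pi.single k 1) i j) * X k).det, fun y => ?_⟩
  rw [RingHom.map_det]
  congr 1
  ext i j
  conv_rhs => rw [pi_eq_sum_univ' y]
  simp [mul_comm, Matrix.sum_apply]

section AddHaar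

variable {E : Type*} [NormedAddCommGroup E] [NormedSpace ℝ E] [FiniteDimensional ℝ E]
  [MeasurableSpace E] [BorelSpace E] (μ : Measure E) [μ.IsAddHaarMeasure]

theorem addHaar_setOf_det_eq_zero {ι : Type*} [Fintype ι] [DecidableEq ι]
    (B : E →ₗ[ℝ] Matrix ι ι ℝ) {x₀ : E} (h₀ : (B x₀).det ≠ 0) :
    μ {x | (B x).det = 0} = 0 := by
  let e := (Module.finBasis ℝ E).equivFunL
  obtain ⟨p, hp⟩ := MvPolynomial.exists_eval_eq_det (B ∘ₗ e.symm.toLinearMap)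
  have hp0 : p ≠ 0 := by
    rintro rfl
    apply h₀
    simpa using (hp (e x₀)).symm
  have h := Measure.absolutelyContinuous_isAddHaarMeasure (μ.map e) volume
    (MvPolynomial.volume_setOf_eval_eq_zero hp0)
  rw [show μ.map e = μ.map e.toHomeomorph.toMeasurableEquiv from rfl,
    MeasurableEquiv.map_apply] at h
  simpa [hp] using h

theorem addHaar_setOf_not_injective {F M : Type*} [AddCommGroup F] [Module ℝ F]
    [FiniteDimensional ℝ F] [AddCommGroup M] [Module ℝ M] (L : E →ₗ[ℝ] F →ₗ[ℝ] M) {x₀ : E}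
    (h₀ : Function.Injective (L x₀)) : μ {x | ¬ Function.Injective (L x)} = 0 := by
  obtain ⟨g, hg⟩ := (L x₀).exists_leftInverse_of_injective (LinearMap.ker_eq_bot.2 h₀)
  let b := Module.finBasis ℝ F
  let B := (LinearMap.toMatrix b b).toLinearMap ∘ₗ LinearMap.llcomp ℝ F M F g ∘ₗ L
  have hB : ∀ x, (B x).det = (g ∘ₗ L x).det := fun x => LinearMap.det_toMatrix b _
  refine measure_mono_null (fun x hx => ?_) (addHaar_setOf_det_eq_zero μ B (x₀ := x₀) ?_)
  · rw [Set.mem_ofPred_eq, hB, LinearMap.det_eq_zero_iff_ker_ne_bot]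
    exact fun h => hx (LinearMap.ker_eq_bot.1 (eq_bot_mono (LinearMap.ker_le_ker_comp _ g) h))
  · rw [hB, hg, LinearMap.det_id]
    exact one_ne_zero

end AddHaar

attribute [local instance] Matrix.frobeniusNormedSpace

/-- The Frobenius norm induces the product topology on matrices, but not syntactically: this
restates `matBorelSpace` for the metric topology, which is the one Hausdorff measures see. -/
instance matBorelSpaceFrobenius {n : ℕ} : @BorelSpace (Matrix (Fin n) (Fin n) ℝ)
    (@UniformSpace.toTopologicalSpace _ (@PseudoEMetricSpace.toUniformSpace _
      (@EMetricSpace.toPseudoEMetricSpace _ inferInstance))) _ := matBorelSpace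

section Matrices

variable {n : ℕ}

local notation "ad" => commutatorLin ℝ (Matrix (Fin n) (Fin n) ℝ)

theorem pm_eq_permMatrix (σ : Equiv.Perm (Fin n)) : pm n σ = σ⁻¹.permMatrix ℝ := by
  ext i j
  simp only [pm, of_apply, PEquiv.toMatrix_apply, Equiv.toPEquiv_apply, Option.mem_def,
    Option.some.injEq, Equiv.Perm.inv_def, Equiv.symm_apply_eq, eq_comm (a := i)]

theorem pm_one : pm n 1 = 1 := by
  simp [pm_eq_permMatrix]

theorem pm_injective : Function.Injective (pm n) := by
  intro σ τ h
  refine Equiv.ext fun j => ?_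
  by_contra hne
  simpa [pm, Ne.symm hne] using congrFun₂ h (σ j) j

theorem pm_mulVec_one (σ : Equiv.Perm (Fin n)) : pm n σ *ᵥ 1 = 1 := by
  simp [pm_eq_permMatrix, permMatrix_mulVec]

theorem one_vecMul_pm (σ : Equiv.Perm (Fin n)) : 1 ᵥ* pm n σ = 1 := by
  simp [pm_eq_permMatrix, vecMul_permMatrix]

theorem transpose_pm_mul_mul_eq_iff (σ : Equiv.Perm (Fin n)) (A : Matrix (Fin n) (Fin n) ℝ) :
    (pm n σ)ᵀ * A * pm n σ = A ↔ A * pm n σ = pm n σ * A := by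
  have h₁ : (pm n σ)ᵀ * pm n σ = 1 := by simp [pm_eq_permMatrix, ← permMatrix_mul]
  have h₂ : pm n σ * (pm n σ)ᵀ = 1 := by simp [pm_eq_permMatrix, ← permMatrix_mul]
  constructor
  · intro h
    calc A * pm n σ = pm n σ * ((pm n σ)ᵀ * A * pm n σ) := by
          rw [← mul_assoc, ← mul_assoc, h₂, one_mul]
      _ = pm n σ * A := by rw [h]
  · intro h
    rw [mul_assoc, h, ← mul_assoc, h₁, one_mul]

theorem one_mem_Aut (A : Matrix (Fin n) (Fin n) ℝ) : 1 ∈ Aut A :=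
  ⟨⟨1, pm_one.symm⟩, by rw [mul_one, one_mul]⟩

def zeroMargins (𝒢 : Set (Matrix (Fin n) (Fin n) ℝ)) :
    Submodule ℝ (Matrix (Fin n) (Fin n) ℝ) where
  carrier := {T | T *ᵥ 1 = 0 ∧ 1 ᵥ* T = 0 ∧ T ∈ Nset 𝒢}
  add_mem' := by
    rintro S T ⟨hS₁, hS₂, hS₃⟩ ⟨hT₁, hT₂, hT₃⟩
    refine ⟨by rw [add_mulVec, hS₁, hT₁, add_zero], by rw [vecMul_add, hS₂, hT₂, add_zero],
      fun i j h => ?_⟩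
    rw [Matrix.add_apply, hS₃ i j h, hT₃ i j h, add_zero]
  zero_mem' := ⟨zero_mulVec _, vecMul_zero _, fun _ _ _ => rfl⟩
  smul_mem' := by
    rintro c T ⟨hT₁, hT₂, hT₃⟩
    refine ⟨by rw [smul_mulVec, hT₁, smul_zero], by rw [vecMul_smul, hT₂, smul_zero],
      fun i j h => ?_⟩
    rw [Matrix.smul_apply, hT₃ i j h, smul_zero]

theorem vectorSpan_le_zeroMargins {𝒢 : Set (Matrix (Fin n) (Fin n) ℝ)}
    (h𝒢 : ∀ P ∈ 𝒢, IsPermMatrix P) : vectorSpan ℝ 𝒢 ≤ zeroMargins 𝒢 := by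
  rw [vectorSpan_def, Submodule.span_le, Set.vsub_subset_iff]
  intro P hP Q hQ
  obtain ⟨σ, rfl⟩ := h𝒢 P hP
  obtain ⟨τ, rfl⟩ := h𝒢 Q hQ
  refine ⟨?_, ?_, fun i j h => ?_⟩
  · rw [vsub_eq_sub, sub_mulVec, pm_mulVec_one, pm_mulVec_one, sub_self]
  · rw [vsub_eq_sub, vecMul_sub, one_vecMul_pm, one_vecMul_pm, sub_self]
  · rw [vsub_eq_sub, Matrix.sub_apply, h _ hP, h _ hQ, sub_zero]

theorem vectorSpan_Aut_le_ker_commutatorLin (A : Matrix (Fin n) (Fin n) ℝ) :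
    vectorSpan ℝ (Aut A) ≤ LinearMap.ker (ad A) := by
  rw [vectorSpan_def, Submodule.span_le, Set.vsub_subset_iff]
  intro P hP Q hQ
  rw [SetLike.mem_coe, vsub_eq_sub, mem_ker_commutatorLin_iff, mul_sub, sub_mul, hP.2, hQ.2]

theorem mem_AutAff_iff (A S : Matrix (Fin n) (Fin n) ℝ) :
    S ∈ AutAff A ↔ S - 1 ∈ zeroMargins (Aut A) ⊓ LinearMap.ker (ad A) := by
  have hN : S ∈ Nset (Aut A) ↔ S - 1 ∈ Nset (Aut A) := by
    refine forall₂_congr fun i j => imp_congr_right fun h => ?_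
    rw [Matrix.sub_apply, h 1 (one_mem_Aut A), sub_zero]
  rw [Submodule.mem_inf, mem_ker_commutatorLin_iff, mul_sub, sub_mul, mul_one, one_mul,
    sub_left_inj]
  simp only [AutAff, zeroMargins, Submodule.mem_mk, AddSubmonoid.mem_mk,
    AddSubsemigroup.mem_mk, Set.mem_ofPred_eq, sub_mulVec, vecMul_sub, one_mulVec, vecMul_one,
    sub_eq_zero, hN, and_assoc]

theorem affineExact_iff (A : Matrix (Fin n) (Fin n) ℝ) :
    AffineExact A ↔ zeroMargins (Aut A) ⊓ LinearMap.ker (ad A) = vectorSpan ℝ (Aut A) := by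
  have key : ∀ S, S ∈ (affineSpan ℝ (Aut A) : Set _) ↔ S - 1 ∈ vectorSpan ℝ (Aut A) :=
    mem_affineSpan_iff_sub_mem_vectorSpan (one_mem_Aut A)
  constructor
  · intro h
    ext T
    simpa [mem_AutAff_iff, key] using Set.ext_iff.1 h (T + 1)
  · intro h
    ext S
    rw [mem_AutAff_iff, key, h]

variable (G : Subgroup (Equiv.Perm (Fin n)))

def Vsubmodule : Submodule ℝ (Matrix (Fin n) (Fin n) ℝ) where
  carrier := Vset G
  add_mem' := by
    rintro A B ⟨hA, hAG⟩ ⟨hB, hBG⟩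
    refine ⟨hA.add hB, fun σ hσ => ?_⟩
    rw [Matrix.mul_add, Matrix.add_mul, hAG σ hσ, hBG σ hσ]
  zero_mem' := ⟨isSymm_zero, fun σ _ => by rw [Matrix.mul_zero, Matrix.zero_mul]⟩
  smul_mem' := by
    rintro c A ⟨hA, hAG⟩
    refine ⟨hA.smul c, fun σ hσ => ?_⟩
    rw [Matrix.mul_smul, Matrix.smul_mul, hAG σ hσ]

theorem matSet_subset_Aut {A : Matrix (Fin n) (Fin n) ℝ} (hA : A ∈ Vset G) :
    matSet G ⊆ Aut A := by
  rintro _ ⟨σ, hσ, rfl⟩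
  exact ⟨⟨σ, rfl⟩, (transpose_pm_mul_mul_eq_iff σ A).1 (hA.2 σ hσ)⟩

theorem AcalA_subset_Vset : AcalA G ⊆ Vset G := by
  intro A hA
  refine ⟨hA.1, fun σ hσ => (transpose_pm_mul_mul_eq_iff σ A).2 ?_⟩
  have hσA : pm n σ ∈ Aut A := hA.2 ▸ ⟨σ, hσ, rfl⟩
  exact hσA.2

variable {G}

theorem affineExact_iff_injective_domRestrict {A : Matrix (Fin n) (Fin n) ℝ} (hA : A ∈ AcalA G)
    {U : Submodule ℝ (Matrix (Fin n) (Fin n) ℝ)} (hDU : Disjoint (vectorSpan ℝ (matSet G)) U)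
    (hW : vectorSpan ℝ (matSet G) ⊔ U = zeroMargins (matSet G)) :
    AffineExact A ↔ Function.Injective ((ad A).domRestrict U) := by
  have hD : vectorSpan ℝ (matSet G) ≤ LinearMap.ker (ad A) :=
    hA.2 ▸ vectorSpan_Aut_le_ker_commutatorLin A
  rw [affineExact_iff, hA.2, ← hW, sup_inf_eq_left_iff_disjoint hDU hD,
    LinearMap.injective_domRestrict_iff, disjoint_iff]

variable (G)

theorem muG_eq_hausdorffMeasure_preimage (t : Set (Matrix (Fin n) (Fin n) ℝ)) :
    muG G t = μH[Module.finrank ℝ (Vsubmodule G)] ((↑) ⁻¹' t : Set (Vsubmodule G)) := by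
  have hV : Submodule.span ℝ (Vset G) = Vsubmodule G := Submodule.span_eq (Vsubmodule G)
  have hmeas : MeasurableSet (Vset G) :=
    (Submodule.closed_of_finiteDimensional (Vsubmodule G)).measurableSet
  have hiso : Isometry ((↑) : Vsubmodule G → Matrix (Fin n) (Fin n) ℝ) := isometry_subtype_coe
  have hrestrict : muG G t = μH[Module.finrank ℝ (Vsubmodule G)] (t ∩ Vset G) := by
    rw [muG, hV, Measure.restrict_apply' hmeas]
  rw [hrestrict, ← hiso.hausdorffMeasure_image (Or.inl (Nat.cast_nonneg _)),
    Set.image_preimage_eq_inter_range, Subtype.range_coe]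
  rfl

theorem muG_setOf_not_affineExact_eq_zero {A₀ : Matrix (Fin n) (Fin n) ℝ} (hA₀ : A₀ ∈ AcalA G)
    (h₀ : AffineExact A₀) : muG G {A | A ∈ AcalA G ∧ ¬ AffineExact A} = 0 := by
  have hperm : ∀ P ∈ matSet G, IsPermMatrix P := by
    rintro _ ⟨σ, -, rfl⟩
    exact ⟨σ, rfl⟩
  obtain ⟨U, hDU, hW⟩ :=
    IsModularLattice.exists_disjoint_and_sup_eq (vectorSpan_le_zeroMargins hperm)
  let L := (ad).compl₁₂ (Vsubmodule G).subtype U.subtype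
  have hL : ∀ A : Vsubmodule G, L A = (ad A).domRestrict U := fun _ => rfl
  rw [muG_eq_hausdorffMeasure_preimage]
  refine measure_mono_null (fun A hA => ?_) (addHaar_setOf_not_injective _ L
    (x₀ := ⟨A₀, AcalA_subset_Vset G hA₀⟩) ?_)
  · rw [Set.mem_ofPred_eq, hL]
    exact mt (affineExact_iff_injective_domRestrict hA.1 hDU hW).2 hA.2
  · rw [hL]
    exact (affineExact_iff_injective_domRestrict hA₀ hDU hW).1 h₀

theorem muG_AcalA_ne_zero (h : (AcalA G).Nonempty) : muG G (AcalA G) ≠ 0 := by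
  obtain ⟨A₁, hA₁⟩ := h
  let C (σ : Equiv.Perm (Fin n)) := (LinearMap.ker (ad (pm n σ))).comap (Vsubmodule G).subtype
  have hcompl :
      ((↑) ⁻¹' AcalA G : Set (Vsubmodule G))ᶜ ⊆ ⋃ σ : {σ // σ ∉ G}, (C σ : Set _) := by
    intro A hA
    obtain ⟨P, hPA, hPG⟩ := Set.not_subset.1 fun h =>
      hA ⟨A.2.1, h.antisymm (matSet_subset_Aut G A.2)⟩
    obtain ⟨σ, rfl⟩ := hPA.1
    exact Set.mem_iUnion.2
      ⟨⟨σ, fun hσ => hPG ⟨σ, hσ, rfl⟩⟩, mem_ker_commutatorLin_iff.2 hPA.2.symm⟩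
  have hC : ∀ σ ∉ G, C σ ≠ ⊤ := by
    intro σ hσ htop
    have hA₁C : (⟨A₁, AcalA_subset_Vset G hA₁⟩ : Vsubmodule G) ∈ C σ := htop ▸ Submodule.mem_top
    have hσA₁ : pm n σ ∈ Aut A₁ := ⟨⟨σ, rfl⟩, (mem_ker_commutatorLin_iff.1 hA₁C).symm⟩
    rw [hA₁.2] at hσA₁
    obtain ⟨τ, hτ, hτσ⟩ := hσA₁
    exact hσ (pm_injective hτσ ▸ hτ)
  have hnull :
      μH[Module.finrank ℝ (Vsubmodule G)] ((↑) ⁻¹' AcalA G : Set (Vsubmodule G))ᶜ = 0 :=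
    measure_mono_null hcompl <|
      measure_iUnion_null fun σ => Measure.addHaar_submodule _ _ (hC σ σ.2)
  rw [muG_eq_hausdorffMeasure_preimage]
  intro h0
  have huniv := measure_union_null h0 hnull
  rw [Set.union_compl_self] at huniv
  have : (μH[Module.finrank ℝ (Vsubmodule G)] : Measure (Vsubmodule G)).IsAddHaarMeasure :=
    isAddHaarMeasure_hausdorffMeasure
  exact isOpen_univ.measure_ne_zero _ Set.univ_nonempty huniv

end Matrices

/-- for any symmetry group `G`, exactly one of the following holds:
affine exactness holds μ_G-almost everywhere on 𝒜(G), or it fails for every A ∈ 𝒜(G). -/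
theorem stmt13 {n : ℕ} (G : Subgroup (Equiv.Perm (Fin n)))
    (hsym : (AcalA G).Nonempty) :
    Xor' (muG G {A | A ∈ AcalA G ∧ ¬ AffineExact A} = 0)
      (∀ A ∈ AcalA G, ¬ AffineExact A) := by
  by_cases hexact : ∃ A₀ ∈ AcalA G, AffineExact A₀
  · obtain ⟨A₀, hA₀, h₀⟩ := hexact
    exact Or.inl ⟨muG_setOf_not_affineExact_eq_zero G hA₀ h₀, fun hall => hall A₀ hA₀ h₀⟩
  · simp only [not_exists, not_and] at hexact
    refine Or.inr ⟨hexact, fun h0 => muG_AcalA_ne_zero G hsym ?_⟩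
    rwa [Set.sep_eq_self_iff_mem_true.2 hexact] at h0
end
end

section
/- Let G ≤ Π_n be a subgroup with a full orbit, i.e., there is an index k whose G-orbit has exactly |G| elements. If S is doubly stochastic and lies in the affine hull of G (viewed as a subset of ℝ^{n×n}), then S lies in the convex hull of G. Consequently aff(G) ∩ DS = conv(G). -/
/-!
If the orbit of `k` is full, `g ↦ g k` is injective on `G`, so the matrices `P_g` have their `1`
in column `k` in distinct rows. Hence if `S = ∑ w_g P_g` is an affine combination, the weight
`w_g` can be read off as the entry `S (g k) k`, which is nonnegative when `S` is doubly
stochastic; so the affine combination is a convex one.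
-/

open Matrix Finset

noncomputable section

open Function

theorem pm_apply {n : ℕ} (σ : Equiv.Perm (Fin n)) (i j : Fin n) :
    pm n σ i j = if σ j = i then 1 else 0 :=
  rfl

theorem pm_mem_DS {n : ℕ} (σ : Equiv.Perm (Fin n)) : pm n σ ∈ DS n := by
  refine ⟨fun i j => ?_, fun i => ?_, fun j => ?_⟩
  · rw [pm_apply]; positivity
  · simp [pm_apply, ← Equiv.eq_symm_apply]
  · simp [pm_apply]

theorem convex_DS (n : ℕ) : Convex ℝ (DS n) := by
  rintro x ⟨hx0, hx1, hx2⟩ y ⟨hy0, hy1, hy2⟩ a b ha hb hab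
  refine ⟨fun i j => ?_, fun i => ?_, fun j => ?_⟩
  · simp only [Matrix.add_apply, Matrix.smul_apply, smul_eq_mul]
    exact add_nonneg (mul_nonneg ha (hx0 i j)) (mul_nonneg hb (hy0 i j))
  · simp [sum_add_distrib, ← mul_sum, hx1 i, hy1 i, hab]
  · simp [sum_add_distrib, ← mul_sum, hx2 j, hy2 j, hab]

theorem injective_apply_of_ncard_orbit_eq {α : Type*} (G : Subgroup (Equiv.Perm α)) [Finite G]
    (k : α) (h : {x : α | ∃ σ ∈ G, σ k = x}.ncard = Nat.card G) :
    Injective fun σ : G => (σ : Equiv.Perm α) k := by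
  set f := fun σ : G => (σ : Equiv.Perm α) k
  have horbit : {x : α | ∃ σ ∈ G, σ k = x} = Set.range f := by
    ext x; simp [f]
  have hcard : Nat.card G ≤ Nat.card (Set.range f) := by
    rw [Nat.card_coe_set_eq, ← horbit, h]
  have hbij := (Set.rangeFactorization_surjective (f := f)).bijective_of_nat_card_le hcard
  exact fun a b hab => hbij.injective (Subtype.ext hab)

theorem sum_smul_pm_apply_of_injective {ι : Type*} {n : ℕ} (s : Finset ι) (w : ι → ℝ)
    (p : ι → Equiv.Perm (Fin n)) {k : Fin n} (hp : Injective fun i => p i k) {i : ι}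
    (hi : i ∈ s) : (∑ j ∈ s, w j • pm n (p j)) (p i k) k = w i := by
  simp only [Matrix.sum_apply, Matrix.smul_apply, smul_eq_mul, pm_apply]
  rw [sum_eq_single_of_mem i hi fun j _ hji => by simp [hp.ne hji]]
  simp

theorem mem_convexHull_of_mem_affineSpan_pm {ι : Type*} {n : ℕ} (p : ι → Equiv.Perm (Fin n))
    {k : Fin n} (hp : Injective fun i => p i k) {S : Matrix (Fin n) (Fin n) ℝ}
    (hS₀ : ∀ i j, 0 ≤ S i j) (hS : S ∈ affineSpan ℝ (Set.range fun i => pm n (p i))) :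
    S ∈ convexHull ℝ (Set.range fun i => pm n (p i)) := by
  obtain ⟨s, w, hw₁, rfl⟩ := eq_affineCombination_of_mem_affineSpan hS
  refine affineCombination_mem_convexHull (fun i hi => ?_) hw₁
  have hentry := hS₀ (p i k) k
  rwa [affineCombination_eq_linear_combination _ _ _ hw₁,
    sum_smul_pm_apply_of_injective s w p hp hi] at hentry

/-- if `G` has a full orbit (some index has a `G`-orbit of exactly `|G|`
elements), then every doubly stochastic matrix in the affine hull of `G` lies in the
convex hull of `G`; consequently `aff(G) ∩ DS = conv(G)`. -/
theorem stmt14 {n : ℕ} (G : Subgroup (Equiv.Perm (Fin n)))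
    (hfull : ∃ k : Fin n, Set.ncard {x : Fin n | ∃ σ ∈ G, σ k = x} = Nat.card G) :
    (∀ S ∈ DS n,
      S ∈ (affineSpan ℝ (matSet G) : Set (Matrix (Fin n) (Fin n) ℝ)) →
        S ∈ convexHull ℝ (matSet G)) ∧
    (affineSpan ℝ (matSet G) : Set (Matrix (Fin n) (Fin n) ℝ)) ∩ DS n =
      convexHull ℝ (matSet G) := by
  obtain ⟨k, hk⟩ := hfull
  have hrange : matSet G = Set.range fun σ : G => pm n σ := Set.image_eq_range _ _
  have hconv : ∀ S ∈ DS n, S ∈ (affineSpan ℝ (matSet G) : Set (Matrix (Fin n) (Fin n) ℝ)) →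
      S ∈ convexHull ℝ (matSet G) := by
    intro S hDS hS
    rw [hrange] at hS ⊢
    exact mem_convexHull_of_mem_affineSpan_pm _ (injective_apply_of_ncard_orbit_eq G k hk)
      hDS.1 hS
  refine ⟨hconv, Set.Subset.antisymm (fun S hS => hconv S hS.2 hS.1) fun S hS => ?_⟩
  refine ⟨convexHull_subset_affineSpan _ hS, convexHull_min ?_ (convex_DS n) hS⟩
  rintro _ ⟨σ, -, rfl⟩
  exact pm_mem_DS σ
end
end
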